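/- If X has the GLL density with parameters θ > 0, λ ≥ 0, p ≥ 0, then for any real r > −θ, E[X^r log X] = −(θ/(r+θ))^(p+3) · (p+1)·(2+p+λ(r+θ)) / (θ·(1+p+λθ)). -/

import Mathlib

/-!
The substitution `x = exp (-t)` maps `(0, 1)` onto `(0, ∞)` and turns
`∫₀¹ (-log x) ^ q * x ^ (a - 1) dx` into the Gamma integral `∫₀^∞ t ^ q * exp (-a t) dt
= Γ(q + 1) / a ^ (q + 1)`. Since `x ^ r * log x * gll θ lam p x` is, up to the normalising
constant, `-(-log x) ^ (p + 1) * (lam - log x) * x ^ (r + θ - 1)`, the moment is a combination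
of two such integrals, and the recurrence `Γ(q + 1) = q Γ(q)` collapses it to the closed form.
-/

open Real MeasureTheory

/-- The generalized Log-Lindley (GLL) density. -/
noncomputable def gll (θ lam p x : ℝ) : ℝ :=
  θ ^ (2 + p) / (Real.Gamma (1 + p) * (1 + p + lam * θ)) *
    (-Real.log x) ^ p * (lam - Real.log x) * x ^ (θ - 1)

open Set

lemma image_exp_neg_Ioi_zero : (fun t : ℝ => exp (-t)) '' Ioi 0 = Ioo 0 1 := by
  ext x
  constructor
  · rintro ⟨t, ht, rfl⟩
    exact ⟨exp_pos _, exp_lt_one_iff.mpr (neg_lt_zero.mpr ht)⟩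
  · rintro ⟨hx0, hx1⟩
    exact ⟨-log x, neg_pos.mpr (log_neg hx0 hx1), by simp [exp_log hx0]⟩

section ExpNegSubstitution

variable {E : Type*} [NormedAddCommGroup E] [NormedSpace ℝ E]

theorem integral_Ioo_zero_one_eq_integral_comp_exp_neg (g : ℝ → E) :
    ∫ x in Ioo 0 1, g x = ∫ t in Ioi 0, exp (-t) • g (exp (-t)) := by
  rw [← image_exp_neg_Ioi_zero, integral_image_eq_integral_abs_deriv_smul measurableSet_Ioi
    (fun t _ => (hasDerivAt_neg t).exp.hasDerivWithinAt) (exp_injective.comp neg_injective).injOn]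
  simp [abs_of_pos (exp_pos _)]

theorem integrableOn_Ioo_zero_one_iff_comp_exp_neg (g : ℝ → E) :
    IntegrableOn g (Ioo 0 1) ↔ IntegrableOn (fun t => exp (-t) • g (exp (-t))) (Ioi 0) := by
  rw [← image_exp_neg_Ioi_zero, integrableOn_image_iff_integrableOn_abs_deriv_smul
    measurableSet_Ioi (fun t _ => (hasDerivAt_neg t).exp.hasDerivWithinAt)
    (exp_injective.comp neg_injective).injOn]
  simp [abs_of_pos (exp_pos _)]

end ExpNegSubstitution

lemma exp_neg_mul_neg_log_rpow_mul_rpow (s a t : ℝ) :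
    exp (-t) * ((-log (exp (-t))) ^ s * exp (-t) ^ (a - 1)) = t ^ s * exp (-(a * t)) := by
  rw [log_exp, neg_neg, ← exp_mul, mul_left_comm, ← exp_add]
  ring_nf

section LogPowerIntegrals

variable {q a : ℝ}

theorem integrableOn_neg_log_rpow_mul_rpow (hq : -1 < q) (ha : 0 < a) :
    IntegrableOn (fun x => (-log x) ^ q * x ^ (a - 1)) (Ioo 0 1) := by
  rw [integrableOn_Ioo_zero_one_iff_comp_exp_neg]
  refine (integrableOn_rpow_mul_exp_neg_mul_rpow hq one_pos ha).congr_fun (fun t _ => ?_)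
    measurableSet_Ioi
  simp only [smul_eq_mul, exp_neg_mul_neg_log_rpow_mul_rpow, rpow_one, neg_mul]

theorem integral_neg_log_rpow_mul_rpow (hq : -1 < q) (ha : 0 < a) :
    ∫ x in Ioo 0 1, (-log x) ^ q * x ^ (a - 1) = (1 / a) ^ (q + 1) * Gamma (q + 1) := by
  rw [integral_Ioo_zero_one_eq_integral_comp_exp_neg,
    ← integral_rpow_mul_exp_neg_mul_Ioi (by linarith) ha, add_sub_cancel_right]
  simp only [smul_eq_mul, exp_neg_mul_neg_log_rpow_mul_rpow]

theorem integral_neg_log_rpow_mul_sub_log_mul_rpow (lam : ℝ) (hq : -1 < q) (ha : 0 < a) :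
    ∫ x in Ioo 0 1, (-log x) ^ q * (lam - log x) * x ^ (a - 1) =
      Gamma (q + 1) * (q + 1 + lam * a) / a ^ (q + 2) := by
  have hsplit : ∀ x ∈ Ioo (0 : ℝ) 1, (-log x) ^ q * (lam - log x) * x ^ (a - 1) =
      lam * ((-log x) ^ q * x ^ (a - 1)) + (-log x) ^ (q + 1) * x ^ (a - 1) := by
    rintro x ⟨hx0, hx1⟩
    rw [rpow_add_one (neg_pos.mpr (log_neg hx0 hx1)).ne']
    ring
  have hq' : -1 < q + 1 := by linarith
  rw [setIntegral_congr_fun measurableSet_Ioo hsplit, integral_add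
    ((integrableOn_neg_log_rpow_mul_rpow hq ha).const_mul lam)
    (integrableOn_neg_log_rpow_mul_rpow hq' ha), integral_const_mul,
    integral_neg_log_rpow_mul_rpow hq ha, integral_neg_log_rpow_mul_rpow hq' ha,
    Gamma_add_one (by linarith : q + 1 ≠ 0), div_rpow zero_le_one ha.le,
    div_rpow zero_le_one ha.le, one_rpow, one_rpow, show q + 2 = q + 1 + 1 by ring,
    rpow_add_one ha.ne' (q + 1)]
  field_simp
  ring

end LogPowerIntegrals

lemma rpow_mul_log_mul_gll {θ lam p r x : ℝ} (hx : x ∈ Ioo 0 1) :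
    x ^ r * log x * gll θ lam p x = -(θ ^ (2 + p) / (Gamma (1 + p) * (1 + p + lam * θ)) *
      ((-log x) ^ (p + 1) * (lam - log x) * x ^ (r + θ - 1))) := by
  rw [gll, rpow_add_one (neg_pos.mpr (log_neg hx.1 hx.2)).ne', add_sub_assoc, rpow_add hx.1]
  ring

theorem gll_xr_log_moment_general (θ lam p r : ℝ) (hθ : 0 < θ) (hp : 0 ≤ p)
    (hr : -θ < r) :
    ∫ x in Set.Ioo (0:ℝ) 1, x ^ r * Real.log x * gll θ lam p x =
      -((θ / (r + θ)) ^ (p + 3) * (p + 1) * (2 + p + lam * (r + θ)) /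
        (θ * (1 + p + lam * θ))) := by
  have hs : 0 < r + θ := by linarith
  rw [setIntegral_congr_fun measurableSet_Ioo fun x hx => rpow_mul_log_mul_gll hx,
    integral_neg, integral_const_mul,
    integral_neg_log_rpow_mul_sub_log_mul_rpow lam (by linarith) hs]
  -- A vanishing normaliser `1 + p + lam * θ` makes both sides `0` (division by zero).
  rcases eq_or_ne (1 + p + lam * θ) 0 with hD | hD
  · simp [hD]
  have hΓ : Gamma (p + 1) ≠ 0 := (Gamma_pos_of_pos (by linarith)).ne'
  rw [Gamma_add_one (by linarith), div_rpow hθ.le hs.le,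
    show p + 1 + 2 = (2 + p) + 1 by ring, show p + 3 = (2 + p) + 1 by ring,
    rpow_add_one hθ.ne', add_comm 1 p]
  field_simp
  ring

theorem gll_xr_log_moment (θ lam p r : ℝ) (hθ : 0 < θ) (hlam : 0 ≤ lam) (hp : 0 ≤ p)
    (hr : -θ < r) :
    ∫ x in Set.Ioo (0:ℝ) 1, x ^ r * Real.log x * gll θ lam p x =
      -((θ / (r + θ)) ^ (p + 3) * (p + 1) * (2 + p + lam * (r + θ)) /
        (θ * (1 + p + lam * θ))) :=
  gll_xr_log_moment_general θ lam p r hθ hp hr
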